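/- Let T and T' be the Bellman optimality operators of M and the Φ-shaped MDP M' respectively. Then for any Q : S × A → ℝ, T'(Q − Φ∘π₁) = T(Q) − Φ∘π₁, where (Φ∘π₁)(s,a) = Φ(s); consequently Q ↦ Q − Φ∘π₁ maps the fixed point of T to the fixed point of T'. -/
import Mathlib

lemma ciSup_sub_const' {A : Type*} [Fintype A] [Nonempty A] (f : A → ℝ) (c : ℝ) :
    (⨆ a, (f a - c)) = (⨆ a, f a) - c := by
  apply le_antisymm
  · exact ciSup_le fun a => sub_le_sub_right
      (le_ciSup (Set.Finite.bddAbove (Set.finite_range f)) a) c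
  · rw [sub_le_iff_le_add]
    exact ciSup_le fun a => by
      have := le_ciSup (Set.Finite.bddAbove (Set.finite_range fun a => f a - c)) a
      linarith

/-- Intertwining of Bellman operators under potential-based shaping:
`T'(Q - Φ∘π₁) = T(Q) - Φ∘π₁`; consequently `Q ↦ Q - Φ∘π₁` maps the fixed
point of `T` to a fixed point of `T'`. -/
theorem bellman_operators_intertwine
    {S A : Type*} [Fintype S] [Fintype A] [Nonempty A]
    (T : S → A → S → ℝ)
    (hT0 : ∀ s a s', 0 ≤ T s a s')
    (hT1 : ∀ s a, ∑ s', T s a s' = 1)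
    (γ : ℝ) (hγ0 : 0 ≤ γ) (hγ1 : γ < 1)
    (R : S → A → S → ℝ) (Φ : S → ℝ)
    (B B' : (S → A → ℝ) → S → A → ℝ)
    (hB : ∀ Q s a, B Q s a = ∑ s', T s a s' * (R s a s' + γ * ⨆ a', Q s' a'))
    (hB' : ∀ Q s a, B' Q s a =
      ∑ s', T s a s' * ((R s a s' + γ * Φ s' - Φ s) + γ * ⨆ a', Q s' a')) :
    (∀ (Q : S → A → ℝ) (s : S) (a : A),
        B' (fun s a => Q s a - Φ s) s a = B Q s a - Φ s)
    ∧ (∀ Q : S → A → ℝ, (∀ s a, B Q s a = Q s a) →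
        ∀ s a, B' (fun s a => Q s a - Φ s) s a = Q s a - Φ s) := by
  have key : ∀ (Q : S → A → ℝ) (s : S) (a : A),
      B' (fun s a => Q s a - Φ s) s a = B Q s a - Φ s := by
    intro Q s a
    rw [hB', hB]
    have : ∀ s', (⨆ a', (Q s' a' - Φ s')) = (⨆ a', Q s' a') - Φ s' :=
      fun s' => ciSup_sub_const' (Q s') (Φ s')
    simp only [this]
    have : (∑ s', T s a s' * ((R s a s' + γ * Φ s' - Φ s)
        + γ * ((⨆ a', Q s' a') - Φ s')))
        = (∑ s', T s a s' * (R s a s' + γ * ⨆ a', Q s' a'))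
          - (∑ s', T s a s') * Φ s := by
      rw [Finset.sum_mul, ← Finset.sum_sub_distrib]
      exact Finset.sum_congr rfl fun s' _ => by ring
    rw [this, hT1, one_mul]
  exact ⟨key, fun Q hQ s a => by rw [key Q s a, hQ s a]⟩
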